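/- Let X be a complex Banach space. Then i_X(X)^⊥ (the annihilator of i_X(X) in X***) is an L-summand in X*** if and only if the canonical projection π_{X*} : X*** → X*** is an L-projection. -/

import Mathlib

/-!
`π_{X*}` is a contractive projection whose kernel is `i_X(X)^⊥`, so if it is an L-projection,
then `I - π_{X*}` is an L-projection onto `i_X(X)^⊥`. Conversely, an L-projection `P` onto the
kernel of a contractive projection `Q` forces `Q = I - P`: for `y ∈ ker P`, the vector
`w = y - Q y` lies in `ran P`, and the L-identity at `Q y` gives `‖Q y‖ = ‖w‖ + ‖y‖`, which
together with `‖Q y‖ ≤ ‖y‖` forces `w = 0`.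
-/

open NormedSpace

noncomputable section

set_option maxHeartbeats 1000000

instance StrongDual.instAddCommGroupComplex {E : Type*} [SeminormedAddCommGroup E]
    [NormedSpace ℂ E] : AddCommGroup (StrongDual ℂ E) :=
  ContinuousLinearMap.addCommGroup

instance StrongDual.instSeminormedAddCommGroupComplex {E : Type*} [SeminormedAddCommGroup E]
    [NormedSpace ℂ E] : SeminormedAddCommGroup (StrongDual ℂ E) :=
  ContinuousLinearMap.toSeminormedAddCommGroup

instance StrongDual.instNormedSpaceComplex {E : Type*} [SeminormedAddCommGroup E]
    [NormedSpace ℂ E] : NormedSpace ℂ (StrongDual ℂ E) :=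
  ContinuousLinearMap.toNormedSpace

/-- The transpose (dual map) of a continuous linear map between (semi)normed spaces:
`ctranspose f` sends a functional `g` to `g ∘ f`. -/
def ctranspose {E F : Type*} [SeminormedAddCommGroup E] [NormedSpace ℂ E]
    [SeminormedAddCommGroup F] [NormedSpace ℂ F] (f : E →L[ℂ] F) :
    StrongDual ℂ F →L[ℂ] StrongDual ℂ E :=
  (ContinuousLinearMap.compL ℂ E F ℂ).flip f

/-- A bounded linear projection `P` is an L-projection if `‖z‖ = ‖P z‖ + ‖z - P z‖`
for all `z`. -/
def IsLProjection {Z : Type*} [SeminormedAddCommGroup Z] [NormedSpace ℂ Z]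
    (P : Z →L[ℂ] Z) : Prop :=
  (∀ z, P (P z) = P z) ∧ ∀ z, ‖z‖ = ‖P z‖ + ‖z - P z‖

section LProjection

variable {Z : Type*} [SeminormedAddCommGroup Z] [NormedSpace ℂ Z]

lemma IsLProjection.of_apply_eq_sub {P Q : Z →L[ℂ] Z} (hP : IsLProjection P)
    (hQ : ∀ z, Q z = z - P z) : IsLProjection Q := by
  refine ⟨fun z => ?_, fun z => ?_⟩
  · simp only [hQ, map_sub, hP.1, sub_self, sub_zero]
  · rw [hQ, sub_sub_cancel, add_comm]
    exact hP.2 z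

lemma range_id_sub_eq_setOf_eq_zero {Q : Z →L[ℂ] Z} (hQ : ∀ z, Q (Q z) = Q z) :
    Set.range (ContinuousLinearMap.id ℂ Z - Q) = {z | Q z = 0} := by
  ext z
  constructor
  · rintro ⟨w, rfl⟩
    simp [hQ]
  · intro hz
    exact ⟨z, by simp [show Q z = 0 from hz]⟩

lemma IsLProjection.apply_eq_sub_of_range_eq [T0Space Z] {P Q : Z →L[ℂ] Z}
    (hP : IsLProjection P) (hQ : ∀ z, Q (Q z) = Q z)
    (hQ_le : ∀ z, ‖Q z‖ ≤ ‖z‖) (hrange : Set.range P = {z | Q z = 0}) (z : Z) :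
    Q z = z - P z := by
  have hQP : ∀ w, Q (P w) = 0 := fun w => (hrange.subset ⟨w, rfl⟩ :)
  have hPy : P (z - P z) = 0 := by rw [map_sub, hP.1, sub_self]
  set y := z - P z
  set w := y - Q y with hw_def
  have hPw : P w = w := by
    obtain ⟨u, hu⟩ : w ∈ Set.range P := hrange.symm.subset
      (show Q w = 0 by rw [hw_def, map_sub, hQ, sub_self])
    rw [← hu, hP.1]
  have hPQy : P (Q y) = -w := by
    rw [show Q y = y - w by rw [hw_def]; abel, map_sub, hPy, hPw, zero_sub]
  have hw : ‖w‖ = 0 := by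
    have h := hP.2 (Q y)
    rw [hPQy, norm_neg, show Q y - -w = y by rw [hw_def]; abel] at h
    linarith [hQ_le y, norm_nonneg w]
  calc Q z = Q y := by rw [map_sub, hQP, sub_zero]
    _ = y := (sub_eq_zero.mp (inseparable_zero_iff_norm.mpr hw).eq).symm

end LProjection

section CanonicalProjection

variable (X : Type*) [SeminormedAddCommGroup X] [NormedSpace ℂ X]

def canonicalProjection :
    StrongDual ℂ (StrongDual ℂ (StrongDual ℂ X)) →L[ℂ]
      StrongDual ℂ (StrongDual ℂ (StrongDual ℂ X)) :=
  inclusionInDoubleDual ℂ (StrongDual ℂ X) ∘L ctranspose (inclusionInDoubleDual ℂ X)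

variable {X}

lemma canonicalProjection_idem (φ : StrongDual ℂ (StrongDual ℂ (StrongDual ℂ X))) :
    canonicalProjection X (canonicalProjection X φ) = canonicalProjection X φ :=
  -- `(i_X)^t ∘ i_{X*} = id` holds definitionally
  rfl

lemma norm_canonicalProjection_apply_le (φ : StrongDual ℂ (StrongDual ℂ (StrongDual ℂ X))) :
    ‖canonicalProjection X φ‖ ≤ ‖φ‖ :=
  calc ‖canonicalProjection X φ‖ ≤ 1 * ‖φ ∘L inclusionInDoubleDual ℂ X‖ :=
        ContinuousLinearMap.le_of_opNorm_le _ (inclusionInDoubleDual_norm_le ℂ _) _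
    _ ≤ 1 * (‖φ‖ * ‖inclusionInDoubleDual ℂ X‖) := by
        gcongr
        exact ContinuousLinearMap.opNorm_comp_le _ _
    _ ≤ ‖φ‖ := by
        rw [one_mul]
        exact mul_le_of_le_one_right (norm_nonneg φ) (inclusionInDoubleDual_norm_le ℂ X)

lemma canonicalProjection_eq_zero_iff (φ : StrongDual ℂ (StrongDual ℂ (StrongDual ℂ X))) :
    canonicalProjection X φ = 0 ↔ ∀ x : X, φ (inclusionInDoubleDual ℂ X x) = 0 := by
  constructor
  · intro h x
    exact congr($h (inclusionInDoubleDual ℂ X x))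
  · intro h
    have ht : ctranspose (inclusionInDoubleDual ℂ X) φ = 0 := ContinuousLinearMap.ext h
    rw [canonicalProjection, ContinuousLinearMap.comp_apply, ht, map_zero]

end CanonicalProjection

theorem annihilator_lsummand_iff_canonical_projection_is_lprojection_general
    (X : Type*) [NormedAddCommGroup X] [NormedSpace ℂ X] :
    (∃ P : StrongDual ℂ (StrongDual ℂ (StrongDual ℂ X)) →L[ℂ] StrongDual ℂ (StrongDual ℂ (StrongDual ℂ X)),
        IsLProjection (Z := StrongDual ℂ (StrongDual ℂ (StrongDual ℂ X))) P ∧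
        Set.range P = {φ : StrongDual ℂ (StrongDual ℂ (StrongDual ℂ X)) |
          ∀ x : X, φ (inclusionInDoubleDual ℂ X x) = 0}) ↔
      IsLProjection ((inclusionInDoubleDual ℂ (StrongDual ℂ X)) ∘L
        ctranspose (E := X) (F := StrongDual ℂ (StrongDual ℂ X)) (inclusionInDoubleDual ℂ X)) := by
  have hker : {φ | ∀ x : X, φ (inclusionInDoubleDual ℂ X x) = 0} =
      {φ | canonicalProjection X φ = 0} :=
    Set.ext fun φ => (canonicalProjection_eq_zero_iff φ).symm
  change _ ↔ IsLProjection (Z := StrongDual ℂ (StrongDual ℂ (StrongDual ℂ X))) (canonicalProjection X)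
  rw [hker]
  constructor
  · rintro ⟨P, hP, hrange⟩
    exact hP.of_apply_eq_sub <| hP.apply_eq_sub_of_range_eq canonicalProjection_idem
      norm_canonicalProjection_apply_le hrange
  · intro hπ
    exact ⟨_, hπ.of_apply_eq_sub fun _ => rfl,
      range_id_sub_eq_setOf_eq_zero canonicalProjection_idem⟩

/-- For a complex Banach space `X`, the annihilator `i_X(X)^⊥` in `X***` is an
L-summand if and only if the canonical projection `π_{X*} = i_{X*} ∘ (i_X)^t` on `X***` is an
L-projection. -/
theorem annihilator_lsummand_iff_canonical_projection_is_lprojection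
    (X : Type*) [NormedAddCommGroup X] [NormedSpace ℂ X] [CompleteSpace X] :
    (∃ P : StrongDual ℂ (StrongDual ℂ (StrongDual ℂ X)) →L[ℂ] StrongDual ℂ (StrongDual ℂ (StrongDual ℂ X)),
        IsLProjection (Z := StrongDual ℂ (StrongDual ℂ (StrongDual ℂ X))) P ∧
        Set.range P = {φ : StrongDual ℂ (StrongDual ℂ (StrongDual ℂ X)) |
          ∀ x : X, φ (inclusionInDoubleDual ℂ X x) = 0}) ↔
      IsLProjection ((inclusionInDoubleDual ℂ (StrongDual ℂ X)) ∘L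
        ctranspose (E := X) (F := StrongDual ℂ (StrongDual ℂ X)) (inclusionInDoubleDual ℂ X)) :=
  annihilator_lsummand_iff_canonical_projection_is_lprojection_general X
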